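/- arXiv:1302.0636 — 3 statements merged into one kernel-verified Lean document; each statement's English description precedes it below -/
import Mathlib

section
/- Let G be a countable group and (E_n)_{n∈ℕ} an increasing exhausting sequence of finite nonempty subsets of G such that E_m · E_n ⊆ E_{m+n} for all m, n, and |E_{n+1}|/|E_n| → 1 as n → ∞. Then (E_n) is a Følner sequence: for every γ ∈ G, |γE_n △ E_n|/|E_n| → 0. -/
/-!
If `γ ∈ E_k` and `k ≤ n`, then `γ E_{n-k}` lies in both `γ E_n` and `E_n`, so
`|γ E_n △ E_n| ≤ 2 (|E_n| - |E_{n-k}|)`. Telescoping the ratio hypothesis gives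
`|E_{n-k}| / |E_n| → 1`, and the Følner ratio is squeezed to `0`.
-/

open Filter Topology

theorem Finset.card_symmDiff_add_two_mul_card_inter {α : Type*} [DecidableEq α] (s t : Finset α) :
    (symmDiff s t).card + 2 * (s ∩ t).card = s.card + t.card := by
  rw [symmDiff_eq_sup_sdiff_inf, Finset.sup_eq_union, Finset.inf_eq_inter,
    Finset.card_sdiff_of_subset Finset.inter_subset_union, ← Finset.card_union_add_card_inter s t]
  have hle := Finset.card_le_card (Finset.inter_subset_union (s := s) (t := t))
  omega

theorem tendsto_add_div_of_tendsto_succ_div {a : ℕ → ℝ} (ha : ∀ n, a n ≠ 0)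
    (h : Tendsto (fun n => a (n + 1) / a n) atTop (𝓝 1)) (k : ℕ) :
    Tendsto (fun n => a (n + k) / a n) atTop (𝓝 1) := by
  induction k with
  | zero => simp [div_self (ha _)]
  | succ k ih =>
    have hstep := (h.comp (tendsto_add_atTop_nat k)).mul ih
    rw [one_mul] at hstep
    refine hstep.congr fun n => ?_
    simp only [Function.comp_apply, ← add_assoc]
    rw [div_mul_div_cancel₀ (ha _)]

theorem tendsto_sub_div_of_tendsto_succ_div {a : ℕ → ℝ} (ha : ∀ n, a n ≠ 0)
    (h : Tendsto (fun n => a (n + 1) / a n) atTop (𝓝 1)) (k : ℕ) :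
    Tendsto (fun n => a (n - k) / a n) atTop (𝓝 1) := by
  have hshift := ((tendsto_add_div_of_tendsto_succ_div ha h k).comp
    (tendsto_sub_atTop_nat k)).inv₀ one_ne_zero
  rw [inv_one] at hshift
  refine hshift.congr' ?_
  filter_upwards [eventually_ge_atTop k] with n hn
  simp [Nat.sub_add_cancel hn]

section
variable {G : Type*} [Group G] [DecidableEq G]

theorem card_symmDiff_image_mul_add_two_mul_card_inter (γ : G) (s : Finset G) :
    (symmDiff (s.image (γ * ·)) s).card + 2 * (s.image (γ * ·) ∩ s).card = 2 * s.card := by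
  rw [Finset.card_symmDiff_add_two_mul_card_inter,
    Finset.card_image_of_injective _ (mul_right_injective γ), two_mul]

theorem card_le_card_image_mul_inter {E : ℕ → Finset G} (hmono : Monotone E)
    (hmul : ∀ m n, ∀ a ∈ E m, ∀ b ∈ E n, a * b ∈ E (m + n)) {γ : G} {k n : ℕ}
    (hγ : γ ∈ E k) (hkn : k ≤ n) :
    (E (n - k)).card ≤ ((E n).image (γ * ·) ∩ E n).card := by
  rw [← Finset.card_image_of_injective _ (mul_right_injective γ)]
  refine Finset.card_le_card fun x hx => ?_
  obtain ⟨b, hb, rfl⟩ := Finset.mem_image.mp hx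
  refine Finset.mem_inter.mpr ⟨Finset.mem_image_of_mem _ (hmono (n.sub_le k) hb), ?_⟩
  simpa [Nat.add_sub_cancel' hkn] using hmul k (n - k) γ hγ b hb

end

theorem stmt3_general {G : Type*} [Group G] [DecidableEq G]
    (E : ℕ → Finset G) (hne : ∀ n, (E n).Nonempty)
    (hmono : Monotone E) (hexh : ∀ γ : G, ∃ n, γ ∈ E n)
    (hmul : ∀ m n, ∀ a ∈ E m, ∀ b ∈ E n, a * b ∈ E (m + n))
    (hratio : Tendsto (fun n => ((E (n + 1)).card : ℝ) / (E n).card) atTop (𝓝 1)) :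
    ∀ γ : G, Tendsto
      (fun n => ((symmDiff ((E n).image (γ * ·)) (E n)).card : ℝ) / (E n).card)
      atTop (𝓝 0) := by
  intro γ
  obtain ⟨k, hγ⟩ := hexh γ
  have hpos (n : ℕ) : (0 : ℝ) < (E n).card := by exact_mod_cast (hne n).card_pos
  have hbound : Tendsto (fun n => 2 * (1 - ((E (n - k)).card : ℝ) / (E n).card)) atTop (𝓝 0) := by
    simpa using ((tendsto_sub_div_of_tendsto_succ_div (fun n => (hpos n).ne') hratio k).const_sub
      1).const_mul (2 : ℝ)
  refine squeeze_zero' (.of_forall fun n => by positivity) ?_ hbound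
  filter_upwards [eventually_ge_atTop k] with n hkn
  have hcard : (symmDiff ((E n).image (γ * ·)) (E n)).card + 2 * (E (n - k)).card
      ≤ 2 * (E n).card := by
    have hinter := card_le_card_image_mul_inter hmono hmul hγ hkn
    have hsymm := card_symmDiff_image_mul_add_two_mul_card_inter γ (E n)
    omega
  replace hcard := (Nat.cast_le (α := ℝ)).mpr hcard
  push_cast at hcard
  rw [div_le_iff₀ (hpos n), mul_sub, mul_one, sub_mul, mul_assoc, div_mul_cancel₀ _ (hpos n).ne']
  linarith

/-- d'Alembert criterion. An increasing exhausting sequence of finite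
nonempty subsets with `E_m · E_n ⊆ E_{m+n}` and `|E_{n+1}|/|E_n| → 1` is Følner. -/
theorem stmt3 {G : Type*} [Group G] [Countable G] [DecidableEq G]
    (E : ℕ → Finset G) (hne : ∀ n, (E n).Nonempty)
    (hmono : Monotone E) (hexh : ∀ γ : G, ∃ n, γ ∈ E n)
    (hmul : ∀ m n, ∀ a ∈ E m, ∀ b ∈ E n, a * b ∈ E (m + n))
    (hratio : Tendsto (fun n => ((E (n + 1)).card : ℝ) / (E n).card) atTop (𝓝 1)) :
    ∀ γ : G, Tendsto
      (fun n => ((symmDiff ((E n).image (γ * ·)) (E n)).card : ℝ) / (E n).card)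
      atTop (𝓝 0) :=
  stmt3_general E hne hmono hexh hmul hratio
end

section
/- Let G be a countable group and (E_n) an increasing exhausting sequence of finite subsets with |E_n| ≥ 1, satisfying E_m·E_n ⊆ E_{m+n} and |E_n|^{1/n} → 1 as n → ∞. Then for every k ≥ 1 and ε > 0 there exists n ≥ k such that for all γ ∈ E_k, |γE_n △ E_n|/|E_n| ≤ ε. In particular (passing to a subsequence adapted to an exhaustion) G is amenable. -/
/-!
Since `|E_n|` grows subexponentially, the ratios `|E_{k(N+1)}| / |E_{kN}|` cannot all exceed
`1 + ε/2` from some point on, for then `|E_{kN}|` would grow geometrically. At such an `N`,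
both `γ E_{kN}` and `E_{kN}` lie in `E_{kN+k}` for `γ ∈ E_k`, so
`|γ E_{kN} △ E_{kN}| ≤ 2 (|E_{kN+k}| - |E_{kN}|) ≤ ε |E_{kN}|`. Taking `ε = 1/(k+1)` for each `k`
and using that the `E_k` exhaust `G` gives a Følner sequence.
-/

open Filter Topology

theorem Finset.card_symmDiff_add_two_mul_card_le {α : Type*} [DecidableEq α] {s t u : Finset α}
    (hs : s ⊆ u) (ht : t ⊆ u) (hst : s.card = t.card) :
    (symmDiff s t).card + 2 * t.card ≤ 2 * u.card := by
  have hsd : (symmDiff s t).card = (s \ t).card + (t \ s).card :=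
    card_union_of_disjoint disjoint_sdiff_sdiff
  have hs_union : (s \ t).card + t.card ≤ u.card :=
    card_sdiff_add_card s t ▸ card_le_card (union_subset hs ht)
  have ht_union : (t \ s).card + s.card ≤ u.card :=
    card_sdiff_add_card t s ▸ card_le_card (union_subset ht hs)
  omega

theorem eventually_lt_mul_pow_of_tendsto_rpow_one_div {b : ℕ → ℝ} (hb : ∀ n, 0 ≤ b n)
    (h : Tendsto (fun n => b n ^ (1 / (n : ℝ))) atTop (𝓝 1)) {c ρ : ℝ} (hc : 0 < c)
    (hρ : 1 < ρ) : ∀ᶠ n in atTop, b n < c * ρ ^ n := by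
  have hroot : Tendsto (fun n : ℕ => c ^ (1 / (n : ℝ)) * ρ) atTop (𝓝 ρ) := by
    simpa using ((Real.continuousAt_const_rpow hc.ne').tendsto.comp
      tendsto_one_div_atTop_nhds_zero_nat).mul_const ρ
  filter_upwards [h.eventually_lt hroot hρ, eventually_ge_atTop 1] with n hn hn1
  have hexp : (0 : ℝ) < 1 / n := by positivity
  rwa [← Real.rpow_lt_rpow_iff (hb n) (by positivity) hexp, Real.mul_rpow hc.le (by positivity),
    one_div, Real.pow_rpow_inv_natCast (by positivity) (by omega), ← one_div]

theorem exists_ge_le_mul_of_tendsto_rpow_one_div {b : ℕ → ℝ} (hb : ∀ n, 0 < b n)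
    (h : Tendsto (fun n => b n ^ (1 / (n : ℝ))) atTop (𝓝 1)) {ρ : ℝ} (hρ : 1 < ρ) (N₀ : ℕ) :
    ∃ N ≥ N₀, b (N + 1) ≤ ρ * b N := by
  by_contra! hfast
  have hgeom (m : ℕ) : ρ ^ m * b N₀ ≤ b (N₀ + m) :=
    geom_le (u := fun m => b (N₀ + m)) (by linarith) m fun i _ => (hfast (N₀ + i) (by omega)).le
  obtain ⟨N, hN⟩ := eventually_atTop.1 <| eventually_lt_mul_pow_of_tendsto_rpow_one_div
    (fun n => (hb n).le) h (c := b N₀ / ρ ^ N₀) (by have := hb N₀; positivity) hρ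
  have hslow := hN (N₀ + N) (by omega)
  have hρN₀ : ρ ^ N₀ ≠ 0 := by positivity
  rw [pow_add, ← mul_assoc, div_mul_cancel₀ _ hρN₀, mul_comm] at hslow
  linarith [hgeom N]

theorem tendsto_rpow_one_div_comp_mul {a : ℕ → ℝ} (ha : ∀ n, 0 ≤ a n)
    (h : Tendsto (fun n => a n ^ (1 / (n : ℝ))) atTop (𝓝 1)) {k : ℕ} (hk : k ≠ 0) :
    Tendsto (fun N => a (k * N) ^ (1 / (N : ℝ))) atTop (𝓝 1) := by
  have hsub : Tendsto (fun N => a (k * N) ^ (1 / ((k * N : ℕ) : ℝ))) atTop (𝓝 1) :=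
    h.comp <| tendsto_atTop_mono (fun N => Nat.le_mul_of_pos_left N (by omega)) tendsto_id
  convert hsub.pow k using 2 with N
  · rw [← Real.rpow_natCast, ← Real.rpow_mul (ha _)]
    congr 1
    push_cast
    field_simp
  · simp

section Folner

variable {G : Type*} [Group G] [DecidableEq G]

theorem card_image_mul_symmDiff_add_two_mul_card_le {A B : Finset G} {γ : G} (hAB : A ⊆ B)
    (hγA : ∀ a ∈ A, γ * a ∈ B) :
    (symmDiff (A.image (γ * ·)) A).card + 2 * A.card ≤ 2 * B.card :=
  Finset.card_symmDiff_add_two_mul_card_le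
    (Finset.image_subset_iff.2 hγA) hAB (Finset.card_image_of_injective _ (mul_right_injective γ))

theorem exists_ge_forall_card_image_mul_symmDiff_div_le (E : ℕ → Finset G)
    (hne : ∀ n, 1 ≤ (E n).card) (hmono : Monotone E)
    (hmul : ∀ m n, ∀ a ∈ E m, ∀ b ∈ E n, a * b ∈ E (m + n))
    (hgrowth : Tendsto (fun n => ((E n).card : ℝ) ^ (1 / (n : ℝ))) atTop (𝓝 1))
    {k : ℕ} (hk : 1 ≤ k) {ε : ℝ} (hε : 0 < ε) :
    ∃ n ≥ k, ∀ γ ∈ E k,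
      ((symmDiff ((E n).image (γ * ·)) (E n)).card : ℝ) / (E n).card ≤ ε := by
  have hpos (n : ℕ) : (0 : ℝ) < (E n).card := by exact_mod_cast hne n
  obtain ⟨N, hN, hslow⟩ := exists_ge_le_mul_of_tendsto_rpow_one_div (fun N => hpos (k * N))
    (tendsto_rpow_one_div_comp_mul (fun n => (hpos n).le) hgrowth (by omega))
    (ρ := 1 + ε / 2) (by linarith) 1
  refine ⟨k * N, Nat.le_mul_of_pos_right k hN, fun γ hγ => ?_⟩
  have hsd := card_image_mul_symmDiff_add_two_mul_card_le (γ := γ)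
    (hmono (Nat.mul_le_mul_left k N.le_succ)) fun a ha => by
      simpa [mul_add, add_comm] using hmul k (k * N) γ hγ a ha
  rw [div_le_iff₀ (hpos _)]
  have hsd' : ((symmDiff ((E (k * N)).image (γ * ·)) (E (k * N))).card : ℝ)
      + 2 * (E (k * N)).card ≤ 2 * (E (k * (N + 1))).card := by exact_mod_cast hsd
  linarith

theorem exists_folner_of_forall_exists_card_image_mul_symmDiff_div_le (E : ℕ → Finset G)
    (hne : ∀ n, 1 ≤ (E n).card) (hmono : Monotone E) (hexh : ∀ γ : G, ∃ n, γ ∈ E n)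
    (hinv : ∀ k ≥ 1, ∀ ε > 0, ∃ n, ∀ γ ∈ E k,
      ((symmDiff ((E n).image (γ * ·)) (E n)).card : ℝ) / (E n).card ≤ ε) :
    ∃ F : ℕ → Finset G, (∀ n, (F n).Nonempty) ∧
      ∀ γ : G, Tendsto
        (fun n => ((symmDiff ((F n).image (γ * ·)) (F n)).card : ℝ) / (F n).card)
        atTop (𝓝 0) := by
  choose n hn using fun j : ℕ => hinv (j + 1) (by omega) (1 / (j + 1 : ℝ)) (by positivity)
  refine ⟨fun j => E (n j), fun j => Finset.card_pos.1 (hne (n j)), fun γ => ?_⟩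
  obtain ⟨m, hm⟩ := hexh γ
  refine squeeze_zero' (Eventually.of_forall fun j => by positivity) ?_
    tendsto_one_div_add_atTop_nhds_zero_nat
  filter_upwards [eventually_ge_atTop m] with j hj
  exact hn j γ (hmono (hj.trans j.le_succ) hm)

end Folner

theorem stmt5_general {G : Type*} [Group G] [DecidableEq G]
    (E : ℕ → Finset G) (hne : ∀ n, 1 ≤ (E n).card)
    (hmono : Monotone E) (hexh : ∀ γ : G, ∃ n, γ ∈ E n)
    (hmul : ∀ m n, ∀ a ∈ E m, ∀ b ∈ E n, a * b ∈ E (m + n))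
    (hgrowth : Tendsto (fun n => ((E n).card : ℝ) ^ (1 / (n : ℝ))) atTop (𝓝 1)) :
    (∀ k ≥ 1, ∀ ε > 0, ∃ n ≥ k, ∀ γ ∈ E k,
      ((symmDiff ((E n).image (γ * ·)) (E n)).card : ℝ) / (E n).card ≤ ε) ∧
    (∃ F : ℕ → Finset G, (∀ n, (F n).Nonempty) ∧
      ∀ γ : G, Tendsto
        (fun n => ((symmDiff ((F n).image (γ * ·)) (F n)).card : ℝ) / (F n).card)
        atTop (𝓝 0)) := by
  have hinv : ∀ k ≥ 1, ∀ ε > 0, ∃ n ≥ k, ∀ γ ∈ E k,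
      ((symmDiff ((E n).image (γ * ·)) (E n)).card : ℝ) / (E n).card ≤ ε :=
    fun k hk ε hε => exists_ge_forall_card_image_mul_symmDiff_div_le E hne hmono hmul hgrowth hk hε
  refine ⟨hinv, exists_folner_of_forall_exists_card_image_mul_symmDiff_div_le E hne hmono hexh
    fun k hk ε hε => ?_⟩
  obtain ⟨n, -, hn⟩ := hinv k hk ε hε
  exact ⟨n, hn⟩

/-- subexponential growth criterion. If `(E_n)` is increasing exhausting,
`E_m·E_n ⊆ E_{m+n}` and `|E_n|^{1/n} → 1`, then for every `k ≥ 1` and `ε > 0` there is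
`n ≥ k` with `|γE_n △ E_n|/|E_n| ≤ ε` for all `γ ∈ E_k`; in particular `G` is amenable
(has a Følner sequence). -/
theorem stmt5 {G : Type*} [Group G] [Countable G] [DecidableEq G]
    (E : ℕ → Finset G) (hne : ∀ n, 1 ≤ (E n).card)
    (hmono : Monotone E) (hexh : ∀ γ : G, ∃ n, γ ∈ E n)
    (hmul : ∀ m n, ∀ a ∈ E m, ∀ b ∈ E n, a * b ∈ E (m + n))
    (hgrowth : Tendsto (fun n => ((E n).card : ℝ) ^ (1 / (n : ℝ))) atTop (𝓝 1)) :
    (∀ k ≥ 1, ∀ ε > 0, ∃ n ≥ k, ∀ γ ∈ E k,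
      ((symmDiff ((E n).image (γ * ·)) (E n)).card : ℝ) / (E n).card ≤ ε) ∧
    (∃ F : ℕ → Finset G, (∀ n, (F n).Nonempty) ∧
      ∀ γ : G, Tendsto
        (fun n => ((symmDiff ((F n).image (γ * ·)) (F n)).card : ℝ) / (F n).card)
        atTop (𝓝 0)) :=
  stmt5_general E hne hmono hexh hmul hgrowth
end

section
/- Let G be a countable group with a length function l, and suppose the balls B(n) are finite nonempty with subexponential growth: |B(n)|^{1/n} → 1. Then G is amenable (there exists a Følner sequence extracted from the balls). -/
/-!
If `|B(n)|^{1/n} → 1`, then for every shift `k` and ratio `r > 1` there are radii `m` with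
`|B(m + k)| ≤ r |B(m)|`: otherwise `|B(N + j k)| ≥ r^j` would grow exponentially.
Left multiplication by `γ` with `l γ ≤ k` maps `B(m)` into `B(m + k)`, so `γ B(m) Δ B(m)`
has at most `2 (|B(m + k)| - |B(m)|) ≤ 2 (r - 1) |B(m)|` elements. Letting
`k → ∞` and `r → 1` along a sequence gives a Følner sequence of balls.
-/

open Filter Topology Finset

lemma eventually_le_pow_of_tendsto_rpow_one_div {f : ℕ → ℝ} (hf : ∀ n, 0 ≤ f n)
    (h : Tendsto (fun n => f n ^ (1 / (n : ℝ))) atTop (𝓝 1)) {c : ℝ} (hc : 1 < c) :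
    ∀ᶠ n in atTop, f n ≤ c ^ n := by
  filter_upwards [h.eventually (ge_mem_nhds hc), eventually_ne_atTop 0] with n hn hn0
  calc f n = (f n ^ (1 / (n : ℝ))) ^ n := by rw [one_div, Real.rpow_inv_natCast_pow (hf n) hn0]
    _ ≤ c ^ n := pow_le_pow_left₀ (Real.rpow_nonneg (hf n) _) hn n

lemma exists_one_lt_pow_lt {r : ℝ} (hr : 1 < r) {k : ℕ} (hk : k ≠ 0) :
    ∃ c : ℝ, 1 < c ∧ c ^ k < r := by
  have hroot : 1 < r ^ (k : ℝ)⁻¹ := Real.one_lt_rpow hr (by positivity)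
  obtain ⟨c, hc1, hc⟩ := exists_between hroot
  refine ⟨c, hc1, ?_⟩
  calc c ^ k < (r ^ (k : ℝ)⁻¹) ^ k := pow_lt_pow_left₀ hc (by linarith) hk
    _ = r := Real.rpow_inv_natCast_pow (by linarith) hk

lemma frequently_le_mul_of_eventually_le_pow {f : ℕ → ℝ} (hf : ∀ n, 0 < f n)
    (hgrowth : ∀ c > 1, ∀ᶠ n in atTop, f n ≤ c ^ n) {k : ℕ} (hk : 0 < k) {r : ℝ}
    (hr : 1 < r) :
    ∃ᶠ m in atTop, f (m + k) ≤ r * f m := by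
  rw [frequently_atTop]
  intro N
  by_contra! hN
  have hgeom : ∀ j : ℕ, r ^ j * f N ≤ f (N + j * k) := by
    intro j
    induction j with
    | zero => simp
    | succ j ih =>
      calc r ^ (j + 1) * f N = r * (r ^ j * f N) := by ring
        _ ≤ r * f (N + j * k) := by gcongr
        _ ≤ f (N + j * k + k) := (hN _ (by omega)).le
        _ = f (N + (j + 1) * k) := by rw [add_one_mul, add_assoc]
  obtain ⟨c, hc1, hck⟩ := exists_one_lt_pow_lt hr hk.ne'
  have hlin : Tendsto (fun j : ℕ => N + j * k) atTop atTop :=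
    tendsto_atTop_mono (fun j => le_add_left (Nat.le_mul_of_pos_right j hk)) tendsto_id
  have hbounded : ∀ᶠ j : ℕ in atTop, (r / c ^ k) ^ j * f N ≤ c ^ N := by
    filter_upwards [hlin.eventually (hgrowth c hc1)] with j hj
    have hcpos : 0 < (c ^ k) ^ j := by positivity
    rw [div_pow, div_mul_eq_mul_div, div_le_iff₀ hcpos, ← pow_mul, ← pow_add, mul_comm k]
    exact (hgeom j).trans hj
  have hunbounded : Tendsto (fun j : ℕ => (r / c ^ k) ^ j * f N) atTop atTop :=
    (tendsto_pow_atTop_atTop_of_one_lt ((one_lt_div (by positivity)).2 hck)).atTop_mul_const (hf N)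
  obtain ⟨j, hj, hj'⟩ := (hbounded.and (hunbounded.eventually_gt_atTop (c ^ N))).exists
  exact hj.not_gt hj'

theorem Finset.card_symmDiff_le_of_subset {α : Type*} [DecidableEq α] {s t u : Finset α}
    (hs : s ⊆ u) (ht : t ⊆ u) (hst : #s = #t) : #(symmDiff s t) ≤ 2 * (#u - #t) := by
  have hsu : #(s \ t) ≤ #u - #t :=
    card_sdiff_of_subset ht ▸ card_le_card (sdiff_subset_sdiff hs le_rfl)
  rw [Finset.symmDiff_def, card_union_of_disjoint disjoint_sdiff_sdiff, ← card_sdiff_comm hst]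
  omega

lemma card_symmDiff_image_mul_div_card_le {G : Type*} [Mul G] [IsLeftCancelMul G]
    [DecidableEq G] {F C : Finset G} (hF : F.Nonempty) {γ : G} (hFC : F ⊆ C)
    (hγFC : F.image (γ * ·) ⊆ C) {ε : ℝ} (hC : (#C : ℝ) ≤ (1 + ε) * #F) :
    (#(symmDiff (F.image (γ * ·)) F) : ℝ) / #F ≤ 2 * ε := by
  have hcard : #(F.image (γ * ·)) = #F := card_image_of_injective _ (mul_right_injective γ)
  have hsymm : (#(symmDiff (F.image (γ * ·)) F) : ℝ) ≤ 2 * ((#C : ℝ) - #F) := by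
    rw [← Nat.cast_sub (card_le_card hFC)]
    exact_mod_cast card_symmDiff_le_of_subset hγFC hFC hcard
  rw [div_le_iff₀ (by exact_mod_cast hF.card_pos)]
  linarith

theorem stmt12_general {G : Type*} [Group G] [DecidableEq G]
    (l : G → ℝ)
    (hsub : ∀ γ₁ γ₂, l (γ₁ * γ₂) ≤ l γ₁ + l γ₂)
    (B : ℕ → Set G) (hB : ∀ n, B n = {γ | l γ ≤ n})
    (hfin : ∀ n, (B n).Finite) (hne : ∀ n, (B n).Nonempty)
    (hgrowth : Tendsto (fun n => ((B n).ncard : ℝ) ^ (1 / (n : ℝ))) atTop (𝓝 1)) :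
    ∃ F : ℕ → Finset G, (∀ n, (F n).Nonempty) ∧
      ∀ γ : G, Tendsto
        (fun n => ((symmDiff ((F n).image (γ * ·)) (F n)).card : ℝ) / (F n).card)
        atTop (𝓝 0) := by
  have hpos : ∀ n, (0 : ℝ) < (B n).ncard :=
    fun n => Nat.cast_pos.2 ((Set.ncard_pos (hfin n)).2 (hne n))
  have hgood : ∀ n : ℕ, ∃ m,
      ((B (m + (n + 1))).ncard : ℝ) ≤ (1 + 1 / ((n : ℝ) + 1)) * (B m).ncard :=
    fun n => (frequently_le_mul_of_eventually_le_pow hpos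
      (fun c hc => eventually_le_pow_of_tendsto_rpow_one_div (fun n => (hpos n).le) hgrowth hc)
      n.succ_pos (lt_add_of_pos_right 1 (by positivity))).exists
  choose m hm using hgood
  have hFne : ∀ n, (hfin (m n)).toFinset.Nonempty := fun n => (hfin _).toFinset_nonempty.2 (hne _)
  have hrate : Tendsto (fun n : ℕ => 2 * (1 / ((n : ℝ) + 1))) atTop (𝓝 0) := by
    simpa using tendsto_one_div_add_atTop_nhds_zero_nat.const_mul (2 : ℝ)
  refine ⟨fun n => (hfin (m n)).toFinset, hFne,
    fun γ => squeeze_zero' (.of_forall fun n => by positivity) ?_ hrate⟩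
  filter_upwards [eventually_ge_atTop ⌈l γ⌉₊] with n hn
  have hγ : l γ ≤ n + 1 := (Nat.le_ceil _).trans (by exact_mod_cast hn.trans n.le_succ)
  refine card_symmDiff_image_mul_div_card_le (hFne n) (C := (hfin (m n + (n + 1))).toFinset)
    ?_ ?_ (by simpa [Set.ncard_eq_toFinset_card _ (hfin _)] using hm n)
  · simp only [subset_iff, Set.Finite.mem_toFinset, hB, Set.mem_ofPred_eq]
    push_cast
    intro x hx
    linarith
  · simp only [subset_iff, mem_image, Set.Finite.mem_toFinset, hB, Set.mem_ofPred_eq]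
    push_cast
    rintro _ ⟨x, hx, rfl⟩
    linarith [hsub γ x]

/-- a countable group with a length function whose balls are finite,
nonempty and of subexponential growth (`|B(n)|^{1/n} → 1`) is amenable: it admits a
Følner sequence (extracted from the balls). -/
theorem stmt12 {G : Type*} [Group G] [Countable G] [DecidableEq G]
    (l : G → ℝ) (hl1 : l 1 = 0) (hlnn : ∀ γ, 0 ≤ l γ)
    (hinv : ∀ γ, l γ⁻¹ = l γ)
    (hsub : ∀ γ₁ γ₂, l (γ₁ * γ₂) ≤ l γ₁ + l γ₂)
    (B : ℕ → Set G) (hB : ∀ n, B n = {γ | l γ ≤ n})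
    (hfin : ∀ n, (B n).Finite) (hne : ∀ n, (B n).Nonempty)
    (hgrowth : Tendsto (fun n => ((B n).ncard : ℝ) ^ (1 / (n : ℝ))) atTop (𝓝 1)) :
    ∃ F : ℕ → Finset G, (∀ n, (F n).Nonempty) ∧
      ∀ γ : G, Tendsto
        (fun n => ((symmDiff ((F n).image (γ * ·)) (F n)).card : ℝ) / (F n).card)
        atTop (𝓝 0) :=
  stmt12_general l hsub B hB hfin hne hgrowth
end
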